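/- Let (A_n)_{n=0}^∞ be an increasing sequence of finite nonempty alphabets with union A, let k ∈ ℕ, let E ⊆ W(A), and let 𝐬 = (s_n(x))_{n=0}^∞ be an infinite sequence of variable words over A such that E is k-large in 𝐬. Then there exists n_0 ∈ ℕ such that for every word z ∈ ⟨(s_i(x))_{i=n_0+1}^∞ ∥ (A_{k+i})_{i=n_0+1}^∞⟩_c there exists a variable word w(x) ∈ ⟨(s_i(x))_{i=0}^{n_0} ∥ (A_{k+i})_{i=0}^{n_0}⟩_v with {w(a)z : a ∈ A_k} ⊆ E (where w(a)z denotes concatenation). -/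

import Mathlib

/-!
Suppose that no `n₀` works. We build, block by block, an extracted subsequence `t₀, t₁, …` of `s`
whose constant span misses `E`, contradicting largeness.

Let the first `j` blocks end at position `m`, and let `P` consist of the empty word and the
(finitely many) words of the constant span of `t₀, …, t_{j-1}`. Colour each word
`s_m(a₀) ⋯ s_{m+N-1}(a_{N-1})` with `aᵢ ∈ A_{k+m}` by the set of those `p ∈ P` for which
`p · word · z ∈ E`, where `z` is a tail witnessing the failure of the claim for `n₀ = m + N`.
For `N` large, Hales–Jewett gives a variable word `v` for which the membership of `p v(c) z` in
`E` does not depend on `c ∈ A_{k+m}`. The failure of the claim for the variable word `p v` yields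
an `a ∈ A_k` with `p v(a) z ∉ E`, hence `p v(c) z ∉ E` for every `c`, and `t_j = v z` is the next
block.
-/

/- Words over an alphabet are `List α`.  The variable symbol `x` is modelled by
`none : Option α`, and variable words are lists over `Option α` containing `none`. -/

namespace HJ

variable {α : Type*}

/-- Substitution of the letter `a` for every occurrence of the variable in a
variable word, producing a constant word. -/
def substC (s : List (Option α)) (a : α) : List α :=
  s.map (fun b => b.getD a)

/-- Substitution of `b ∈ A ∪ {x}` (a letter `some a` or the variable `none`)
for every occurrence of the variable. -/
def substV (s : List (Option α)) (b : Option α) : List (Option α) :=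
  s.map (fun c => Option.elim c b some)

/-- `s` is a variable word over the alphabet `S`: all its letters lie in `S`
and it contains at least one occurrence of the variable. -/
def IsVarWord (S : Set α) (s : List (Option α)) : Prop :=
  (∀ a : α, some a ∈ s → a ∈ S) ∧ none ∈ s

/-- `W(S)`: the set of (constant) words over the alphabet `S`. -/
def WordsOver (S : Set α) : Set (List α) :=
  { w | ∀ a ∈ w, a ∈ S }

/-- The constant span of the sequence `s` of variable words, with indices
restricted to `I` and the letter substituted at position `l i` taken from the
alphabet `B (l i)`: all concatenations `s_{l_0}(a_0) ⋯ s_{l_n}(a_n)` with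
`l_0 < ⋯ < l_n` in `I` and `a_i ∈ B (l_i)`. -/
def constSpan (B : ℕ → Set α) (s : ℕ → List (Option α)) (I : Set ℕ) :
    Set (List α) :=
  { w | ∃ (n : ℕ) (l : Fin (n + 1) → ℕ) (a : Fin (n + 1) → α),
      StrictMono l ∧ (∀ i, l i ∈ I) ∧ (∀ i, a i ∈ B (l i)) ∧
      w = (List.ofFn fun i => substC (s (l i)) (a i)).flatten }

/-- The variable span of the sequence `s` of variable words, with indices
restricted to `I` and alphabets given by `B`: all concatenations
`s_{l_0}(b_0) ⋯ s_{l_n}(b_n)` with `l_0 < ⋯ < l_n` in `I` and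
`b_i ∈ B (l_i) ∪ {x}` which contain at least one occurrence of the variable. -/
def varSpan (B : ℕ → Set α) (s : ℕ → List (Option α)) (I : Set ℕ) :
    Set (List (Option α)) :=
  { w | ∃ (n : ℕ) (l : Fin (n + 1) → ℕ) (b : Fin (n + 1) → Option α),
      StrictMono l ∧ (∀ i, l i ∈ I) ∧
      (∀ i, ∀ a : α, b i = some a → a ∈ B (l i)) ∧
      none ∈ w ∧
      w = (List.ofFn fun i => substV (s (l i)) (b i)).flatten }

/-- `(t_0, …, t_l)` is a finite extracted subsequence of `s` (with alphabets `B`):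
there are `0 = m_0 < m_1 < ⋯` with `t_i` in the variable span of
`(s_n)_{n = m_i}^{m_{i+1} - 1}` (with alphabets `B`) for all `i ≤ l`. -/
def ExtractedFin (B : ℕ → Set α) (s t : ℕ → List (Option α)) (l : ℕ) : Prop :=
  ∃ m : ℕ → ℕ, m 0 = 0 ∧ StrictMono m ∧
    ∀ i ≤ l, t i ∈ varSpan B s (Set.Ico (m i) (m (i + 1)))

/-- `t` is an infinite extracted subsequence of `s` (with alphabets `B`). -/
def Extracted (B : ℕ → Set α) (s t : ℕ → List (Option α)) : Prop :=
  ∀ l : ℕ, ExtractedFin B s t l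

/-- `E` is large in `s` (with alphabets `B`): `E` meets the constant span of
every infinite extracted subsequence of `s`. -/
def IsLarge (B : ℕ → Set α) (E : Set (List α)) (s : ℕ → List (Option α)) : Prop :=
  ∀ w : ℕ → List (Option α), Extracted B s w →
    (E ∩ constSpan B w Set.univ).Nonempty

/-- `E_F = {z ∈ W(S) : w ++ z ∈ E for every w ∈ F}`. -/
def wordQuot (S : Set α) (E F : Set (List α)) : Set (List α) :=
  { z | z ∈ WordsOver S ∧ ∀ w ∈ F, w ++ z ∈ E }

end HJ

theorem Combinatorics.Line.exists_mono_in_high_dimension_fin (α κ : Type*) [Finite α] [Finite κ] :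
    ∃ n, ∀ C : (Fin n → α) → κ, ∃ l : Combinatorics.Line α (Fin n), l.IsMono C := by
  obtain ⟨ι, _, hι⟩ := Combinatorics.Line.exists_mono_in_high_dimension α κ
  refine ⟨Fintype.card ι, fun C => ?_⟩
  obtain ⟨l, c, hl⟩ := hι fun v => C (v ∘ (Fintype.equivFin ι).symm)
  obtain ⟨i, hi⟩ := l.proper
  exact ⟨⟨l.idxFun ∘ (Fintype.equivFin ι).symm, Fintype.equivFin ι i, by simpa using hi⟩, c, hl⟩

namespace HJ

open Set

variable {α β β' γ δ : Type*}

section SeqSpan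

variable {f : ℕ → β → List γ} {C : ℕ → Set β} {I J : Set ℕ} {u v w : List γ}

/-- `constSpan` and, up to the requirement that the variable occurs, `varSpan` are instances of
this span. -/
def seqSpan (f : ℕ → β → List γ) (C : ℕ → Set β) (I : Set ℕ) : Set (List γ) :=
  { w | ∃ (n : ℕ) (l : Fin (n + 1) → ℕ) (b : Fin (n + 1) → β),
      StrictMono l ∧ (∀ i, l i ∈ I) ∧ (∀ i, b i ∈ C (l i)) ∧
      w = (List.ofFn fun i => f (l i) (b i)).flatten }

theorem mem_seqSpan_iff : w ∈ seqSpan f C I ↔ ∃ L : List (ℕ × β), L ≠ [] ∧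
    L.Pairwise (fun p q => p.1 < q.1) ∧ (∀ q ∈ L, q.1 ∈ I ∧ q.2 ∈ C q.1) ∧
    w = (L.map fun q => f q.1 q.2).flatten := by
  constructor
  · rintro ⟨n, l, b, hl, hI, hC, rfl⟩
    refine ⟨List.ofFn fun i => (l i, b i), by simp, List.pairwise_ofFn.2 fun _ _ h => hl h,
      ?_, by rw [List.map_ofFn]; rfl⟩
    simp only [List.mem_ofFn, forall_exists_index]
    rintro _ i rfl
    exact ⟨hI i, hC i⟩
  · rintro ⟨_ | ⟨q, L⟩, hL, hpw, hmem, rfl⟩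
    · exact absurd rfl hL
    refine ⟨L.length, fun i => ((q :: L).get i).1, fun i => ((q :: L).get i).2,
      fun i j h => List.pairwise_iff_get.1 hpw i j h, fun i => (hmem _ (List.get_mem _ _)).1,
      fun i => (hmem _ (List.get_mem _ _)).2, ?_⟩
    conv_lhs => rw [← List.ofFn_get (q :: L), List.map_ofFn]
    rfl

theorem seqSpan_mono (h : I ⊆ J) : seqSpan f C I ⊆ seqSpan f C J :=
  fun _ ⟨n, l, b, hl, hI, hC, hw⟩ => ⟨n, l, b, hl, fun i => h (hI i), hC, hw⟩

theorem seqSpan_congr {f' : ℕ → β → List γ} (h : ∀ l ∈ I, f l = f' l) :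
    seqSpan f C I = seqSpan f' C I := by
  ext w
  constructor <;> rintro ⟨n, l, b, hl, hI, hC, rfl⟩ <;>
    exact ⟨n, l, b, hl, hI, hC, by simp only [h _ (hI _)]⟩

theorem map_mem_seqSpan {C' : ℕ → Set β'} {f' : ℕ → β' → List δ} (φ : γ → δ) (g : β → β')
    (hf : ∀ l b, (f l b).map φ = f' l (g b)) (hg : ∀ l ∈ I, ∀ b ∈ C l, g b ∈ C' l)
    (hw : w ∈ seqSpan f C I) : w.map φ ∈ seqSpan f' C' I := by
  obtain ⟨n, l, b, hl, hI, hC, rfl⟩ := hw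
  exact ⟨n, l, g ∘ b, hl, hI, fun i => hg _ (hI i) _ (hC i), by
    simp only [List.map_flatten, List.map_ofFn, Function.comp_def, hf]⟩

theorem append_mem_seqSpan (hu : u ∈ seqSpan f C I) (hv : v ∈ seqSpan f C J)
    (hIJ : ∀ i ∈ I, ∀ j ∈ J, i < j) : u ++ v ∈ seqSpan f C (I ∪ J) := by
  obtain ⟨L, hL, hpw, hmem, rfl⟩ := mem_seqSpan_iff.1 hu
  obtain ⟨L', -, hpw', hmem', rfl⟩ := mem_seqSpan_iff.1 hv
  refine mem_seqSpan_iff.2 ⟨L ++ L', by simp [hL], ?_, ?_, by simp⟩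
  · exact List.pairwise_append.2 ⟨hpw, hpw', fun p hp q hq =>
      hIJ _ (hmem p hp).1 _ (hmem' q hq).1⟩
  · intro q hq
    rcases List.mem_append.1 hq with hq | hq
    · exact ⟨Or.inl (hmem q hq).1, (hmem q hq).2⟩
    · exact ⟨Or.inr (hmem' q hq).1, (hmem' q hq).2⟩

theorem exists_mem_seqSpan_inter_Iio (hw : w ∈ seqSpan f C I) :
    ∃ M, w ∈ seqSpan f C (I ∩ Iio M) := by
  obtain ⟨n, l, b, hl, hI, hC, rfl⟩ := hw
  exact ⟨l (Fin.last n) + 1, n, l, b, hl,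
    fun i => ⟨hI i, Nat.lt_succ_of_le (hl.monotone (Fin.le_last i))⟩, hC, rfl⟩

theorem seqSpan_Iio_succ_subset (j : ℕ) :
    seqSpan f C (Iio (j + 1)) ⊆ seqSpan f C (Iio j) ∪
      image2 (fun p b => p ++ f j b) (insert [] (seqSpan f C (Iio j))) (C j) := by
  intro w hw
  obtain ⟨L, hL, hpw, hmem, rfl⟩ := mem_seqSpan_iff.1 hw
  obtain ⟨L, q, rfl⟩ := (List.eq_nil_or_concat' L).resolve_left hL
  have hlt : ∀ p ∈ L, p.1 < q.1 := fun p hp =>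
    (List.pairwise_append.1 hpw).2.2 p hp q (List.mem_singleton_self q)
  have hq := hmem q (by simp)
  rcases Nat.lt_succ_iff_lt_or_eq.1 hq.1 with hqj | hqj
  · refine Or.inl (mem_seqSpan_iff.2 ⟨L ++ [q], hL, hpw, fun p hp => ?_, rfl⟩)
    rcases List.mem_append.1 hp with hp | hp
    · exact ⟨(hlt p hp).trans hqj, (hmem p (by simp [hp])).2⟩
    · obtain rfl := List.mem_singleton.1 hp
      exact ⟨hqj, hq.2⟩
  refine Or.inr ⟨(L.map fun q => f q.1 q.2).flatten, ?_, q.2, hqj ▸ hq.2, by simp [hqj]⟩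
  rcases eq_or_ne L [] with rfl | hL'
  · exact mem_insert _ _
  refine mem_insert_of_mem _ (mem_seqSpan_iff.2 ⟨L, hL', (List.pairwise_append.1 hpw).1,
    fun p hp => ⟨hqj ▸ hlt p hp, (hmem p (by simp [hp])).2⟩, rfl⟩)

theorem seqSpan_empty : seqSpan f C ∅ = ∅ :=
  eq_empty_of_forall_notMem fun _ ⟨_, _, _, _, hI, _⟩ => hI 0

theorem seqSpan_Iio_finite (hC : ∀ n, (C n).Finite) (j : ℕ) : (seqSpan f C (Iio j)).Finite := by
  induction j with
  | zero => simp [seqSpan_empty]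
  | succ j ih =>
    exact (ih.union (((ih.insert []).image2 _ (hC j)))).subset (seqSpan_Iio_succ_subset j)

end SeqSpan

section Spans

variable {B : ℕ → Set α} {s t : ℕ → List (Option α)} {I J : Set ℕ}

/-- The alphabet `B n ∪ {x}`. -/
def optLetters (B : ℕ → Set α) (n : ℕ) : Set (Option α) :=
  {b | ∀ a ∈ b, a ∈ B n}

theorem constSpan_eq_seqSpan : constSpan B s I = seqSpan (fun l => substC (s l)) B I :=
  rfl

theorem mem_varSpan_iff {w : List (Option α)} :
    w ∈ varSpan B s I ↔ none ∈ w ∧ w ∈ seqSpan (fun l => substV (s l)) (optLetters B) I := by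
  constructor
  · rintro ⟨n, l, b, hl, hI, hB, hw, rfl⟩
    exact ⟨hw, n, l, b, hl, hI, hB, rfl⟩
  · rintro ⟨hw, n, l, b, hl, hI, hB, rfl⟩
    exact ⟨n, l, b, hl, hI, hB, hw, rfl⟩

theorem varSpan_mono (h : I ⊆ J) : varSpan B s I ⊆ varSpan B s J := fun _ hw =>
  mem_varSpan_iff.2 ⟨(mem_varSpan_iff.1 hw).1, seqSpan_mono h (mem_varSpan_iff.1 hw).2⟩

theorem substC_substV (u : List (Option α)) (b : Option α) (a : α) :
    substC (substV u b) a = substC u (b.getD a) := by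
  simp only [substC, substV, List.map_map]
  congr 1
  funext c
  cases c <;> cases b <;> rfl

theorem substC_append (u v : List (Option α)) (a : α) :
    substC (u ++ v) a = substC u a ++ substC v a :=
  List.map_append ..

theorem substC_map_some (u : List α) (a : α) : substC (u.map some) a = u := by
  simp [substC]

theorem map_some_substC (u : List (Option α)) (a : α) :
    (substC u a).map some = substV u (some a) := by
  simp only [substC, substV, List.map_map]
  congr 1
  funext c
  cases c <;> rfl

theorem substC_mem_constSpan {w : List (Option α)} {c : α} (hw : w ∈ varSpan B s I)
    (hc : ∀ l ∈ I, c ∈ B l) : substC w c ∈ constSpan B s I := by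
  refine map_mem_seqSpan (f := fun l => substV (s l)) (fun b => b.getD c) (fun b => b.getD c)
    (fun l b => substC_substV (s l) b c) (fun l hl b hb => ?_) (mem_varSpan_iff.1 hw).2
  cases b with
  | none => exact hc l hl
  | some a => exact hb a rfl

theorem map_some_mem_seqSpan {u : List α} (hu : u ∈ constSpan B s I) :
    u.map some ∈ seqSpan (fun l => substV (s l)) (optLetters B) I :=
  map_mem_seqSpan (f := fun l => substC (s l)) some some (fun l a => map_some_substC (s l) a)
    (fun _ _ _ ha _ h => Option.some_injective _ h ▸ ha) hu

theorem map_some_append_mem_varSpan {u : List α} {v : List (Option α)}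
    (hu : u ∈ constSpan B s I) (hv : v ∈ varSpan B s J) (hIJ : ∀ i ∈ I, ∀ j ∈ J, i < j) :
    u.map some ++ v ∈ varSpan B s (I ∪ J) :=
  mem_varSpan_iff.2 ⟨List.mem_append_right _ (mem_varSpan_iff.1 hv).1,
    append_mem_seqSpan (map_some_mem_seqSpan hu) (mem_varSpan_iff.1 hv).2 hIJ⟩

theorem append_map_some_mem_varSpan {v : List (Option α)} {u : List α}
    (hv : v ∈ varSpan B s I) (hu : u ∈ constSpan B s J) (hIJ : ∀ i ∈ I, ∀ j ∈ J, i < j) :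
    v ++ u.map some ∈ varSpan B s (I ∪ J) :=
  mem_varSpan_iff.2 ⟨List.mem_append_left _ (mem_varSpan_iff.1 hv).1,
    append_mem_seqSpan (mem_varSpan_iff.1 hv).2 (map_some_mem_seqSpan hu) hIJ⟩

theorem constSpan_Iio_subset_of_blocks (hB : Monotone B) {m : ℕ → ℕ} (hm : StrictMono m)
    {j : ℕ} (ht : ∀ i < j, t i ∈ varSpan B s (Ico (m i) (m (i + 1)))) :
    constSpan B t (Iio j) ⊆ constSpan B s (Iio (m j)) := by
  rw [constSpan_eq_seqSpan, constSpan_eq_seqSpan]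
  induction j with
  | zero => simp [seqSpan_empty]
  | succ j ih =>
    have ih := ih fun i hi => ht i (Nat.lt_succ_of_lt hi)
    intro w hw
    rcases seqSpan_Iio_succ_subset j hw with hw | ⟨p, hp, c, hc, rfl⟩
    · exact seqSpan_mono (Iio_subset_Iio (hm (Nat.lt_succ_self j)).le) (ih hw)
    have hjc : substC (t j) c ∈ seqSpan (fun l => substC (s l)) B (Ico (m j) (m (j + 1))) :=
      substC_mem_constSpan (ht j (Nat.lt_succ_self j))
        fun l hl => hB ((hm.id_le j).trans hl.1) hc
    rcases hp with rfl | hp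
    · exact seqSpan_mono Ico_subset_Iio_self hjc
    refine seqSpan_mono ?_ (append_mem_seqSpan (ih hp) hjc fun i hi l hl => lt_of_lt_of_le hi hl.1)
    rintro l (hl | hl)
    · exact hl.trans (hm (Nat.lt_succ_self j))
    · exact hl.2

def blockWord (s : ℕ → List (Option α)) (m : ℕ) {n : ℕ} (g : Fin (n + 1) → Option α) :
    List (Option α) :=
  (List.ofFn fun i => substV (s (m + i)) (g i)).flatten

theorem blockWord_mem_varSpan (hB : Monotone B) (hs : ∀ n, none ∈ s n) {m n : ℕ}
    {g : Fin (n + 1) → Option α} (hg : ∀ i, g i ∈ optLetters B m) (hx : ∃ i, g i = none) :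
    blockWord s m g ∈ varSpan B s (Ico m (m + (n + 1))) := by
  obtain ⟨i₀, hi₀⟩ := hx
  refine ⟨n, fun i => m + i, g, fun i j h => Nat.add_lt_add_left h m,
    fun i => ⟨Nat.le_add_right m i, Nat.add_lt_add_left i.2 m⟩,
    fun i a ha => hB (Nat.le_add_right m i) (hg i a ha), ?_, rfl⟩
  refine List.mem_flatten.2 ⟨_, List.mem_ofFn.2 ⟨i₀, rfl⟩, ?_⟩
  simp only [hi₀, substV, List.mem_map]
  exact ⟨none, hs _, rfl⟩

theorem substC_blockWord (s : ℕ → List (Option α)) (m : ℕ) {n : ℕ} (g : Fin (n + 1) → Option α)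
    (a : α) :
    substC (blockWord s m g) a =
      (List.ofFn fun i => substC (s (m + i)) ((g i).getD a)).flatten := by
  simp only [blockWord, substC, List.map_flatten, List.map_ofFn]
  exact congrArg _ (congrArg _ (funext fun i => substC_substV _ _ a))

end Spans

section Construction

variable {B : ℕ → Set α} {E : Set (List α)} {s : ℕ → List (Option α)}

def HasUniformHead (B : ℕ → Set α) (E : Set (List α)) (s : ℕ → List (Option α)) : Prop :=
  ∃ n₀, ∀ z ∈ constSpan B s (Ioi n₀), ∃ w ∈ varSpan B s (Iic n₀), ∀ a ∈ B 0, substC w a ++ z ∈ E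

theorem exists_mono_blockWord (hfin : ∀ n, (B n).Finite) (hB : Monotone B)
    (hs : ∀ n, none ∈ s n) {Q : Set (List α)} (hQ : Q.Finite) (m : ℕ) :
    ∃ N, ∀ z : List α, ∃ v ∈ varSpan B s (Ico m (m + N)), ∀ p ∈ Q, ∀ a ∈ B m, ∀ c ∈ B m,
      (p ++ substC v a ++ z ∈ E ↔ p ++ substC v c ++ z ∈ E) := by
  classical
  have := (hfin m).to_subtype
  have := hQ.to_subtype
  obtain ⟨N, hN⟩ := Combinatorics.Line.exists_mono_in_high_dimension_fin (B m) (Q → Bool)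
  refine ⟨N, fun z => ?_⟩
  let word : (Fin N → B m) → List α := fun f =>
    (List.ofFn fun i => substC (s (m + i)) (f i)).flatten
  obtain ⟨l, col, hl⟩ := hN fun f p => decide (p.1 ++ word f ++ z ∈ E)
  obtain ⟨i₀, hi₀⟩ := l.proper
  obtain ⟨n, rfl⟩ : ∃ n, N = n + 1 := Nat.exists_eq_succ_of_ne_zero (Fin.pos i₀).ne'
  let v := blockWord s m fun i => (l.idxFun i).map Subtype.val
  have hv_subst : ∀ a (ha : a ∈ B m), substC v a = word (l ⟨a, ha⟩) := fun a ha => by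
    rw [substC_blockWord]
    refine congrArg _ (congrArg _ (funext fun i => ?_))
    rw [Combinatorics.Line.coe_apply]
    cases l.idxFun i <;> rfl
  refine ⟨v, blockWord_mem_varSpan hB hs (fun i a ha => ?_) ⟨i₀, by simp [hi₀]⟩,
    fun p hp a ha c hc => ?_⟩
  · obtain ⟨a', -, rfl⟩ := Option.map_eq_some_iff.1 ha
    exact a'.2
  rw [hv_subst a ha, hv_subst c hc]
  exact decide_eq_decide.1
    ((congrFun (hl ⟨a, ha⟩) ⟨p, hp⟩).trans (congrFun (hl ⟨c, hc⟩) ⟨p, hp⟩).symm)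

theorem exists_block (hfin : ∀ n, (B n).Finite) (hB : Monotone B) (hs : ∀ n, none ∈ s n)
    (hneg : ¬ HasUniformHead B E s) {m : ℕ} {P : Set (List α)} (hPfin : P.Finite)
    (hP : P ⊆ constSpan B s (Iio m)) :
    ∃ M, ∃ t ∈ varSpan B s (Ico m M), ∀ p ∈ insert [] P, ∀ c ∈ B m, p ++ substC t c ∉ E := by
  obtain ⟨N, hN⟩ := exists_mono_blockWord (E := E) hfin hB hs (hPfin.insert []) m
  obtain ⟨z, hz, hzE⟩ : ∃ z ∈ constSpan B s (Ioi (m + N)),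
      ∀ w ∈ varSpan B s (Iic (m + N)), ∃ a ∈ B 0, substC w a ++ z ∉ E := by
    by_contra! h
    exact hneg ⟨m + N, h⟩
  obtain ⟨v, hv, hv_iff⟩ := hN z
  obtain ⟨M, hzM⟩ := exists_mem_seqSpan_inter_Iio (f := fun l => substC (s l)) hz
  refine ⟨m + N + M, v ++ z.map some, varSpan_mono ?_
    (append_map_some_mem_varSpan hv hzM fun i hi j hj => lt_trans hi.2 hj.1), ?_⟩
  · rintro i (hi | hi) <;> simp only [mem_Ico, mem_inter_iff, mem_Ioi, mem_Iio] at hi ⊢ <;> omega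
  intro p hp c hc hpc
  have hpv : p.map some ++ v ∈ varSpan B s (Iic (m + N)) := by
    rcases hp with rfl | hp
    · exact varSpan_mono (fun _ hl => le_of_lt hl.2) hv
    refine varSpan_mono ?_
      (map_some_append_mem_varSpan (hP hp) hv fun i hi j hj => lt_of_lt_of_le hi hj.1)
    rintro i (hi | hi) <;> simp only [mem_Iio, mem_Ico, mem_Iic] at hi ⊢ <;> omega
  obtain ⟨a, ha, haE⟩ := hzE _ hpv
  rw [substC_append, substC_map_some] at haE
  rw [substC_append, substC_map_some, ← List.append_assoc] at hpc
  exact haE ((hv_iff p hp a (hB (Nat.zero_le m) ha) c hc).2 hpc)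

structure IsAvoidingPrefix (B : ℕ → Set α) (E : Set (List α)) (s : ℕ → List (Option α)) (j : ℕ)
    (t : ℕ → List (Option α)) : Prop where
  blocks : ∃ m : ℕ → ℕ, m 0 = 0 ∧ StrictMono m ∧
    ∀ i < j, t i ∈ varSpan B s (Ico (m i) (m (i + 1)))
  disjoint : Disjoint E (constSpan B t (Iio j))

theorem isAvoidingPrefix_zero (t : ℕ → List (Option α)) : IsAvoidingPrefix B E s 0 t :=
  ⟨⟨id, rfl, strictMono_id, fun _ h => absurd h (Nat.not_lt_zero _)⟩, by
    simp [constSpan_eq_seqSpan, seqSpan_empty]⟩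

namespace IsAvoidingPrefix

variable {j : ℕ} {t : ℕ → List (Option α)}

theorem congr {t' : ℕ → List (Option α)} (h : IsAvoidingPrefix B E s j t)
    (ht : ∀ i < j, t i = t' i) : IsAvoidingPrefix B E s j t' := by
  obtain ⟨m, hm0, hm, hblocks⟩ := h.blocks
  refine ⟨⟨m, hm0, hm, fun i hi => ht i hi ▸ hblocks i hi⟩, ?_⟩
  rw [constSpan_eq_seqSpan, ← seqSpan_congr (I := Iio j) fun l hl => congrArg substC (ht l hl)]
  exact h.disjoint

theorem extractedFin {l : ℕ} (h : IsAvoidingPrefix B E s (l + 1) t) : ExtractedFin B s t l :=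
  let ⟨m, hm0, hm, hblocks⟩ := h.blocks
  ⟨m, hm0, hm, fun i hi => hblocks i (Nat.lt_succ_of_le hi)⟩

theorem exists_update (hfin : ∀ n, (B n).Finite) (hB : Monotone B) (hs : ∀ n, none ∈ s n)
    (hneg : ¬ HasUniformHead B E s) (h : IsAvoidingPrefix B E s j t) :
    ∃ b, IsAvoidingPrefix B E s (j + 1) (Function.update t j b) := by
  obtain ⟨m, hm0, hm, hblocks⟩ := h.blocks
  obtain ⟨M, b, hb, hbE⟩ := exists_block hfin hB hs hneg
    (seqSpan_Iio_finite (f := fun l => substC (t l)) hfin j)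
    (constSpan_Iio_subset_of_blocks hB hm hblocks)
  have ht : ∀ i < j, Function.update t j b i = t i := fun i hi =>
    Function.update_of_ne hi.ne _ _
  -- the ends of the blocks after the `j`-th are pushed past `M`
  let m' : ℕ → ℕ := fun i => if i ≤ j then m i else m i + M
  have hm' : StrictMono m' := by
    refine strictMono_nat_of_lt_succ fun i => ?_
    by_cases hi : i + 1 ≤ j
    · simpa [m', hi, Nat.le_of_succ_le hi] using hm (Nat.lt_succ_self i)
    · by_cases hij : i ≤ j
      · simp only [m', hi, hij, if_true, if_false]
        exact Nat.lt_add_right M (hm (Nat.lt_succ_self i))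
      · simpa [m', hi, hij] using hm (Nat.lt_succ_self i)
  refine ⟨b, ⟨⟨m', by simp [m', hm0], hm', fun i hi => ?_⟩, ?_⟩⟩
  · rcases Nat.lt_succ_iff_lt_or_eq.1 hi with hi | rfl
    · simpa [m', hi.le, Nat.succ_le_of_lt hi, ht i hi] using hblocks i hi
    · simpa [m'] using varSpan_mono (Ico_subset_Ico_right (Nat.le_add_left M _)) hb
  have hspan : seqSpan (fun l => substC (Function.update t j b l)) B (Iio j) =
      constSpan B t (Iio j) :=
    seqSpan_congr fun l hl => congrArg substC (ht l hl)
  rw [Set.disjoint_right]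
  intro w hw
  rcases seqSpan_Iio_succ_subset (f := fun l => substC (Function.update t j b l)) j hw with
    hw | ⟨p, hp, c, hc, rfl⟩
  · rw [hspan] at hw
    exact Set.disjoint_right.1 h.disjoint hw
  · rw [hspan] at hp
    simpa using hbE p hp c (hB (hm.id_le j) hc)

end IsAvoidingPrefix

end Construction

theorem exists_forall_of_update {P : ℕ → (ℕ → β) → Prop} {f₀ : ℕ → β} (h₀ : P 0 f₀)
    (hloc : ∀ j f g, (∀ i < j, f i = g i) → P j f → P j g)
    (hstep : ∀ j f, P j f → ∃ b, P (j + 1) (Function.update f j b)) :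
    ∃ f, ∀ j, P j f := by
  have : Nonempty β := ⟨f₀ 0⟩
  choose! b hb using hstep
  let F : ℕ → ℕ → β := fun j => Nat.rec f₀ (fun j f => Function.update f j (b j f)) j
  have hF : ∀ j, P j (F j) := fun j => Nat.rec h₀ (fun j ih => hb j _ ih) j
  have hFF : ∀ j, ∀ i < j, F j i = F (i + 1) i := by
    intro j
    induction j with
    | zero => exact fun i hi => absurd hi (Nat.not_lt_zero i)
    | succ j ih =>
      intro i hi
      rcases Nat.lt_succ_iff_lt_or_eq.1 hi with hi | rfl
      · exact (Function.update_of_ne hi.ne _ _).trans (ih i hi)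
      · rfl
  exact ⟨fun i => F (i + 1) i, fun j => hloc j _ _ (hFF j) (hF j)⟩

theorem IsLarge.hasUniformHead {B : ℕ → Set α} {E : Set (List α)} {s : ℕ → List (Option α)}
    (hfin : ∀ n, (B n).Finite) (hB : Monotone B) (hs : ∀ n, none ∈ s n)
    (hlarge : IsLarge B E s) : HasUniformHead B E s := by
  by_contra hneg
  obtain ⟨t, ht⟩ := exists_forall_of_update
    (isAvoidingPrefix_zero (B := B) (E := E) (s := s) fun _ => [])
    (fun _ _ _ h hj => hj.congr h) fun _ _ hj => hj.exists_update hfin hB hs hneg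
  obtain ⟨w, hwE, hw⟩ := hlarge t fun l => (ht (l + 1)).extractedFin
  obtain ⟨J, hJ⟩ := exists_mem_seqSpan_inter_Iio (f := fun l => substC (t l)) hw
  exact Set.disjoint_left.1 (ht J).disjoint hwE (seqSpan_mono inter_subset_right hJ)

end HJ

open HJ in
theorem stmt14_general {α : Type*} (A : ℕ → Finset α) (hmono : Monotone A) (k : ℕ) (E : Set (List α))
    (s : ℕ → List (Option α)) (hs : ∀ n, IsVarWord (⋃ n, (A n : Set α)) (s n))
    (hlarge : IsLarge (fun n => (A (k + n) : Set α)) E s) :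
    ∃ n₀ : ℕ, ∀ z ∈ constSpan (fun n => (A (k + n) : Set α)) s (Set.Ioi n₀),
      ∃ w ∈ varSpan (fun n => (A (k + n) : Set α)) s (Set.Iic n₀),
        ∀ a ∈ A k, substC w a ++ z ∈ E :=
  hlarge.hasUniformHead (fun n => (A (k + n)).finite_toSet)
    (fun _ _ h => Finset.coe_subset.2 (hmono (Nat.add_le_add_left h k))) (fun n => (hs n).2)

open HJ in
/-- Claim 1 of Lemma 3.10: a uniform head for all tails, `k`-version. -/
theorem stmt14 {α : Type*} (A : ℕ → Finset α) (hmono : Monotone A)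
    (hne : ∀ n, (A n).Nonempty) (k : ℕ)
    (E : Set (List α)) (hE : E ⊆ WordsOver (⋃ n, (A n : Set α)))
    (s : ℕ → List (Option α)) (hs : ∀ n, IsVarWord (⋃ n, (A n : Set α)) (s n))
    (hlarge : IsLarge (fun n => (A (k + n) : Set α)) E s) :
    ∃ n₀ : ℕ, ∀ z ∈ constSpan (fun n => (A (k + n) : Set α)) s (Set.Ioi n₀),
      ∃ w ∈ varSpan (fun n => (A (k + n) : Set α)) s (Set.Iic n₀),
        ∀ a ∈ A k, substC w a ++ z ∈ E :=
  stmt14_general A hmono k E s hs hlarge
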